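/- Let ξ be a random field on ℝ^d and T₁, T₂ disjoint subsets of ℝ^d. Suppose there exist random fields η₁, η₂ on the same probability space such that η₁ and η₂ are independent and P{ξ(x) = η_i(x) for all x ∈ T_i} ≥ 1 − δ_i for i = 1, 2. Then the absolute regularity coefficient β(T₁, T₂) := ‖P_{T₁∪T₂} − P_{T₁} × P_{T₂}‖_var satisfies β(T₁, T₂) ≤ 8(δ₁ + δ₂). -/

import Mathlib

/-!
Restricting to `T₁` and `T₂`, the law of `(ξ|T₁, ξ|T₂)` is setwise `δ₁ + δ₂`-close to the law of
`(η₁|T₁, η₂|T₂)`, which by independence is the product of the laws of `η₁|T₁` and `η₂|T₂`; these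
are in turn `δᵢ`-close to the laws of `ξ|Tᵢ`, so their product is `δ₁ + δ₂`-close to
`P_{T₁} × P_{T₂}`. A signed measure whose values are bounded by `ε` in absolute value has total
variation at most `2ε`, whence `β(T₁, T₂) ≤ 4(δ₁ + δ₂)`.
-/

open MeasureTheory Set
open scoped ENNReal

section

variable {α β : Type*} [MeasurableSpace α] [MeasurableSpace β] {μ ν ρ : Measure α}
  {ε ε' : ℝ≥0∞}

theorem Measure.prod_apply_le_prod_apply_add_left (ν₀ : Measure β)
    [IsProbabilityMeasure ν₀] [SFinite μ] [SFinite ν] (h : ∀ s, MeasurableSet s → μ s ≤ ν s + ε)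
    {s : Set (α × β)} (hs : MeasurableSet s) : μ.prod ν₀ s ≤ ν.prod ν₀ s + ε := by
  rw [Measure.prod_apply_symm hs, Measure.prod_apply_symm hs]
  calc ∫⁻ y, μ ((·, y) ⁻¹' s) ∂ν₀ ≤ ∫⁻ y, (ν ((·, y) ⁻¹' s) + ε) ∂ν₀ :=
        lintegral_mono fun y => h _ (hs.preimage measurable_prodMk_right)
    _ = ∫⁻ y, ν ((·, y) ⁻¹' s) ∂ν₀ + ε := by
        rw [lintegral_add_right _ measurable_const, lintegral_const, measure_univ, mul_one]

theorem Measure.prod_apply_le_prod_apply_add_right (μ₀ : Measure β)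
    [IsProbabilityMeasure μ₀] [SFinite μ] [SFinite ν] (h : ∀ s, MeasurableSet s → μ s ≤ ν s + ε)
    {s : Set (β × α)} (hs : MeasurableSet s) : μ₀.prod μ s ≤ μ₀.prod ν s + ε := by
  rw [Measure.prod_apply hs, Measure.prod_apply hs]
  calc ∫⁻ x, μ (Prod.mk x ⁻¹' s) ∂μ₀ ≤ ∫⁻ x, (ν (Prod.mk x ⁻¹' s) + ε) ∂μ₀ :=
        lintegral_mono fun x => h _ (hs.preimage measurable_prodMk_left)
    _ = ∫⁻ x, ν (Prod.mk x ⁻¹' s) ∂μ₀ + ε := by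
        rw [lintegral_add_right _ measurable_const, lintegral_const, measure_univ, mul_one]

def SetwiseClose (μ ν : Measure α) (ε : ℝ≥0∞) : Prop :=
  ∀ s, MeasurableSet s → μ s ≤ ν s + ε ∧ ν s ≤ μ s + ε

namespace SetwiseClose

theorem symm (h : SetwiseClose μ ν ε) : SetwiseClose ν μ ε :=
  fun s hs => (h s hs).symm

theorem trans (h : SetwiseClose μ ν ε) (h' : SetwiseClose ν ρ ε') :
    SetwiseClose μ ρ (ε + ε') := by
  intro s hs
  obtain ⟨hμν, hνμ⟩ := h s hs
  obtain ⟨hνρ, hρν⟩ := h' s hs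
  constructor
  · calc μ s ≤ ν s + ε := hμν
      _ ≤ ρ s + ε' + ε := by gcongr
      _ = ρ s + (ε + ε') := by ring
  · calc ρ s ≤ ν s + ε' := hρν
      _ ≤ μ s + ε + ε' := by gcongr
      _ = μ s + (ε + ε') := by ring

theorem prod_left (ν₀ : Measure β) [IsProbabilityMeasure ν₀] [SFinite μ] [SFinite ν]
    (h : SetwiseClose μ ν ε) : SetwiseClose (μ.prod ν₀) (ν.prod ν₀) ε := fun _ hs =>
  ⟨Measure.prod_apply_le_prod_apply_add_left ν₀ (fun t ht => (h t ht).1) hs,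
    Measure.prod_apply_le_prod_apply_add_left ν₀ (fun t ht => (h t ht).2) hs⟩

theorem prod_right (μ₀ : Measure β) [IsProbabilityMeasure μ₀] [SFinite μ] [SFinite ν]
    (h : SetwiseClose μ ν ε) : SetwiseClose (μ₀.prod μ) (μ₀.prod ν) ε := fun _ hs =>
  ⟨Measure.prod_apply_le_prod_apply_add_right μ₀ (fun t ht => (h t ht).1) hs,
    Measure.prod_apply_le_prod_apply_add_right μ₀ (fun t ht => (h t ht).2) hs⟩

theorem prod {μ' ν' : Measure β} [SFinite μ] [IsProbabilityMeasure ν] [IsProbabilityMeasure μ']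
    [SFinite ν'] (h : SetwiseClose μ ν ε) (h' : SetwiseClose μ' ν' ε') :
    SetwiseClose (μ.prod μ') (ν.prod ν') (ε + ε') :=
  (h.prod_left μ').trans (h'.prod_right ν)

end SetwiseClose

variable {Ω : Type*} [MeasurableSpace Ω]

theorem measure_le_ofReal_of_subset_compl (μ : Measure Ω) [IsProbabilityMeasure μ]
    {S E : Set Ω} (hS : MeasurableSet S) (hES : E ⊆ Sᶜ) {δ : ℝ}
    (hE : ENNReal.ofReal (1 - δ) ≤ μ E) : μ S ≤ ENNReal.ofReal δ := by
  have hcompl : ENNReal.ofReal (1 - δ) ≤ 1 - μ S :=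
    (prob_compl_eq_one_sub (μ := μ) hS) ▸ hE.trans (measure_mono hES)
  calc μ S = 1 - (1 - μ S) := (ENNReal.sub_sub_cancel ENNReal.one_ne_top prob_le_one).symm
    _ ≤ 1 - ENNReal.ofReal (1 - δ) := by gcongr
    _ ≤ ENNReal.ofReal δ := by
        rw [tsub_le_iff_right, ← ENNReal.ofReal_one]
        exact (ENNReal.ofReal_le_ofReal (by linarith)).trans ENNReal.ofReal_add_le

theorem map_apply_le_map_apply_add_of_eqOn (μ : Measure Ω) [IsProbabilityMeasure μ]
    {f g : Ω → α} (hf : Measurable f) (hg : Measurable g) {E : Set Ω} (hfg : EqOn f g E) {δ : ℝ}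
    (hE : ENNReal.ofReal (1 - δ) ≤ μ E) {s : Set α} (hs : MeasurableSet s) :
    μ.map f s ≤ μ.map g s + ENNReal.ofReal δ := by
  have hbad : μ (f ⁻¹' s \ g ⁻¹' s) ≤ ENNReal.ofReal δ :=
    measure_le_ofReal_of_subset_compl μ ((hf hs).diff (hg hs))
      (fun ω hω hbad => hbad.2 (show g ω ∈ s from hfg hω ▸ hbad.1)) hE
  rw [Measure.map_apply hf hs, Measure.map_apply hg hs]
  calc μ (f ⁻¹' s) ≤ μ (f ⁻¹' s ∩ g ⁻¹' s) + μ (f ⁻¹' s \ g ⁻¹' s) :=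
        measure_le_inter_add_sdiff μ _ _
    _ ≤ μ (g ⁻¹' s) + ENNReal.ofReal δ := by gcongr; exact inter_subset_right

theorem setwiseClose_map_of_eqOn (μ : Measure Ω) [IsProbabilityMeasure μ]
    {f g : Ω → α} (hf : Measurable f) (hg : Measurable g) {E : Set Ω} (hfg : EqOn f g E) {δ : ℝ}
    (hE : ENNReal.ofReal (1 - δ) ≤ μ E) : SetwiseClose (μ.map f) (μ.map g) (ENNReal.ofReal δ) :=
  fun _ hs => ⟨map_apply_le_map_apply_add_of_eqOn μ hf hg hfg hE hs,
    map_apply_le_map_apply_add_of_eqOn μ hg hf hfg.symm hE hs⟩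

theorem enorm_toReal_sub_le {x y ε : ℝ≥0∞} (hx : x ≠ ∞) (hy : y ≠ ∞) (hxy : x ≤ y + ε)
    (hyx : y ≤ x + ε) : ‖x.toReal - y.toReal‖ₑ ≤ ε := by
  rcases eq_or_ne ε ∞ with rfl | hε
  · exact le_top
  rw [Real.enorm_eq_ofReal_abs, ENNReal.ofReal_le_iff_le_toReal hε, abs_sub_le_iff]
  constructor
  · linarith [ENNReal.toReal_le_add hxy hy hε]
  · linarith [ENNReal.toReal_le_add hyx hx hε]

theorem SignedMeasure.totalVariation_univ_le_two_mul (s : SignedMeasure α) {ε : ℝ≥0∞}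
    (h : ∀ t, MeasurableSet t → ‖s t‖ₑ ≤ ε) : s.totalVariation univ ≤ 2 * ε := by
  obtain ⟨i, hi, hpos, hneg, hposPart, hnegPart⟩ := s.toJordanDecomposition_spec
  rw [SignedMeasure.totalVariation, Measure.add_apply, hposPart, hnegPart,
    s.toMeasureOfZeroLE_apply hpos hi MeasurableSet.univ,
    s.toMeasureOfLEZero_apply hneg hi.compl MeasurableSet.univ, two_mul]
  gcongr
  · calc _ = ENNReal.ofReal (s (i ∩ univ)) := (ENNReal.ofReal_eq_coe_nnreal _).symm
      _ ≤ ‖s (i ∩ univ)‖ₑ := by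
          rw [Real.enorm_eq_ofReal_abs]; exact ENNReal.ofReal_le_ofReal (le_abs_self _)
      _ ≤ ε := h _ (hi.inter .univ)
  · calc _ = ENNReal.ofReal (-s (iᶜ ∩ univ)) := (ENNReal.ofReal_eq_coe_nnreal _).symm
      _ ≤ ‖s (iᶜ ∩ univ)‖ₑ := by
          rw [Real.enorm_eq_ofReal_abs]; exact ENNReal.ofReal_le_ofReal (neg_le_abs _)
      _ ≤ ε := h _ (hi.compl.inter .univ)

theorem SetwiseClose.totalVariation_sub_le {μ ν : Measure α} [IsFiniteMeasure μ]
    [IsFiniteMeasure ν] {ε : ℝ≥0∞} (h : SetwiseClose μ ν ε) :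
    (μ.toSignedMeasure - ν.toSignedMeasure).totalVariation univ ≤ 2 * ε :=
  SignedMeasure.totalVariation_univ_le_two_mul _ fun t ht => by
    rw [Measure.toSignedMeasure_sub_apply ht]
    exact enorm_toReal_sub_le (measure_ne_top μ t) (measure_ne_top ν t) (h t ht).1 (h t ht).2

end

theorem beta_le_of_indep_approx_general {d : ℕ} {Ω : Type*} [MeasurableSpace Ω]
    (μ : Measure Ω) [IsProbabilityMeasure μ]
    (ξ η₁ η₂ : Ω → EuclideanSpace ℝ (Fin d) → ℝ)
    (hξ : Measurable ξ) (hη₁ : Measurable η₁) (hη₂ : Measurable η₂)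
    (T₁ T₂ : Set (EuclideanSpace ℝ (Fin d)))
    (hindep : ProbabilityTheory.IndepFun η₁ η₂ μ)
    (δ₁ δ₂ : ℝ) (hδ₁ : 0 < δ₁) (hδ₂ : 0 < δ₂)
    (h₁ : ENNReal.ofReal (1 - δ₁) ≤ μ {ω | ∀ x ∈ T₁, ξ ω x = η₁ ω x})
    (h₂ : ENNReal.ofReal (1 - δ₂) ≤ μ {ω | ∀ x ∈ T₂, ξ ω x = η₂ ω x}) :
    ((μ.map (fun ω => ((fun x : T₁ => ξ ω x), (fun x : T₂ => ξ ω x)))).toSignedMeasure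
      - ((μ.map (fun ω => (fun x : T₁ => ξ ω x))).prod
          (μ.map (fun ω => (fun x : T₂ => ξ ω x)))).toSignedMeasure).totalVariation Set.univ
      ≤ ENNReal.ofReal (8 * (δ₁ + δ₂)) := by
  have mξ₁ := T₁.measurable_restrict.comp hξ
  have mξ₂ := T₂.measurable_restrict.comp hξ
  have mη₁ := T₁.measurable_restrict.comp hη₁
  have mη₂ := T₂.measurable_restrict.comp hη₂
  have := Measure.isProbabilityMeasure_map (μ := μ) mξ₁.aemeasurable
  have := Measure.isProbabilityMeasure_map (μ := μ) mη₂.aemeasurable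
  have heq₁ : EqOn (T₁.domRestrict ∘ ξ) (T₁.domRestrict ∘ η₁) {ω | ∀ x ∈ T₁, ξ ω x = η₁ ω x} :=
    fun _ hω => Set.domRestrict_eq_domRestrict_iff.2 hω
  have heq₂ : EqOn (T₂.domRestrict ∘ ξ) (T₂.domRestrict ∘ η₂) {ω | ∀ x ∈ T₂, ξ ω x = η₂ ω x} :=
    fun _ hω => Set.domRestrict_eq_domRestrict_iff.2 hω
  -- The events need not be measurable, so `ξ` is replaced by `η₁` and `η₂` in two separate steps.
  have hjoint := (setwiseClose_map_of_eqOn μ (mξ₁.prodMk mξ₂) (mη₁.prodMk mξ₂)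
      (fun ω hω => congrArg (·, _) (heq₁ hω)) h₁).trans
    (setwiseClose_map_of_eqOn μ (mη₁.prodMk mξ₂) (mη₁.prodMk mη₂)
      (fun ω hω => congrArg (_, ·) (heq₂ hω)) h₂)
  rw [((hindep.comp T₁.measurable_restrict T₂.measurable_restrict).map_prod_eq_prod_map_map
    mη₁.aemeasurable mη₂.aemeasurable)] at hjoint
  have hmarg := (setwiseClose_map_of_eqOn μ mξ₁ mη₁ heq₁ h₁).symm.prod
    (setwiseClose_map_of_eqOn μ mξ₂ mη₂ heq₂ h₂).symm
  calc _ ≤ 2 * (ENNReal.ofReal δ₁ + ENNReal.ofReal δ₂ + (ENNReal.ofReal δ₁ + ENNReal.ofReal δ₂)) :=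
        (hjoint.trans hmarg).totalVariation_sub_le
    _ ≤ ENNReal.ofReal (8 * (δ₁ + δ₂)) := by
        rw [← ENNReal.ofReal_add hδ₁.le hδ₂.le, ← ENNReal.ofReal_add (by positivity) (by positivity),
          ← ENNReal.ofReal_ofNat 2, ← ENNReal.ofReal_mul zero_le_two]
        exact ENNReal.ofReal_le_ofReal (by linarith)

/-- Lemma bounding the absolute regularity (β-mixing) coefficient of a random field `ξ`
on `ℝ^d` between two disjoint sets `T₁, T₂`, given independent approximating fields. -/
theorem beta_le_of_indep_approx {d : ℕ} {Ω : Type*} [MeasurableSpace Ω]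
    (μ : Measure Ω) [IsProbabilityMeasure μ]
    (ξ η₁ η₂ : Ω → EuclideanSpace ℝ (Fin d) → ℝ)
    (hξ : Measurable ξ) (hη₁ : Measurable η₁) (hη₂ : Measurable η₂)
    (T₁ T₂ : Set (EuclideanSpace ℝ (Fin d))) (hdisj : Disjoint T₁ T₂)
    (hindep : ProbabilityTheory.IndepFun η₁ η₂ μ)
    (δ₁ δ₂ : ℝ) (hδ₁ : 0 < δ₁) (hδ₂ : 0 < δ₂)
    (h₁ : ENNReal.ofReal (1 - δ₁) ≤ μ {ω | ∀ x ∈ T₁, ξ ω x = η₁ ω x})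
    (h₂ : ENNReal.ofReal (1 - δ₂) ≤ μ {ω | ∀ x ∈ T₂, ξ ω x = η₂ ω x}) :
    ((μ.map (fun ω => ((fun x : T₁ => ξ ω x), (fun x : T₂ => ξ ω x)))).toSignedMeasure
      - ((μ.map (fun ω => (fun x : T₁ => ξ ω x))).prod
          (μ.map (fun ω => (fun x : T₂ => ξ ω x)))).toSignedMeasure).totalVariation Set.univ
      ≤ ENNReal.ofReal (8 * (δ₁ + δ₂)) :=
  beta_le_of_indep_approx_general μ ξ η₁ η₂ hξ hη₁ hη₂ T₁ T₂ hindep δ₁ δ₂ hδ₁ hδ₂ h₁ h₂
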